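/- The Gauss curvature of the metric ds² = P(y)(dx² + dy²) on the upper half-plane ℝ × (0,∞), which equals K(y) = -(1/(2P(y))) (d²/dy²)(log P(y)) · (1/2), is given explicitly by K(y) = -96 e^{2y}(e^{8y} + 2e^{6y} + 18e^{4y} + 2e^{2y} + 1) / (e^{4y} + 10e^{2y} + 1)^3. Equivalently: for the conformal metric e^{2φ}(dx²+dy²) with e^{2φ} = P(y), the curvature K = -e^{-2φ} Δφ equals the stated expression. -/

import Mathlib

/-!
In the variable `u = e^{2y}` the conformal factor is the rational function
`R u = (u² + 10u + 1) / (4(u - 1)²)`, and `d/dy = 2u d/du`. Hence `φ' = G(u)` with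
`G = 2u (½ log R)'` and `φ'' = 2u G'(u)`, so the curvature identity is an identity of rational
functions in `u`.
-/

open Real Filter

noncomputable def P (y : ℝ) : ℝ :=
  (Real.exp (4*y) + 10 * Real.exp (2*y) + 1) / (4 * (Real.exp (2*y) - 1)^2)

noncomputable def phi (y : ℝ) : ℝ := (1/2) * Real.log (P y)

noncomputable def R (u : ℝ) : ℝ := (u^2 + 10*u + 1) / (4*(u - 1)^2)

/-- The function `G` with `φ'(y) = G(e^{2y})`. -/
noncomputable def dphiExp (u : ℝ) : ℝ := 2*u*((u + 5)/(u^2 + 10*u + 1) - 1/(u - 1))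

lemma exp_mul_eq_pow_exp_two_mul (n : ℕ) (y : ℝ) : exp ((2*n) * y) = exp (2*y)^n := by
  rw [← exp_nat_mul]; ring_nf

lemma P_eq_R_exp (y : ℝ) : P y = R (exp (2*y)) := by
  rw [P, R, ← exp_mul_eq_pow_exp_two_mul 2]; norm_num

lemma hasDerivAt_exp_two_mul (y : ℝ) : HasDerivAt (fun y => exp (2*y)) (2 * exp (2*y)) y := by
  simpa [mul_comm] using ((hasDerivAt_id y).const_mul 2).exp

lemma hasDerivAt_half_log_R {u : ℝ} (hu : 1 < u) :
    HasDerivAt (fun u => (1/2) * log (R u)) ((u + 5)/(u^2 + 10*u + 1) - 1/(u - 1)) u := by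
  have hu1 : u - 1 ≠ 0 := by linarith
  have hq : 0 < u^2 + 10*u + 1 := by positivity
  have hR : HasDerivAt R _ u :=
    ((((hasDerivAt_id u).pow 2).add ((hasDerivAt_id u).const_mul 10)).add_const 1).div
      ((((hasDerivAt_id u).sub_const 1).pow 2).const_mul 4) (by positivity)
  refine ((hR.log (by rw [R]; positivity)).const_mul (1/2)).congr_deriv ?_
  simp only [R, id, Pi.add_apply, Pi.pow_apply]
  field_simp
  ring

lemma hasDerivAt_phi {y : ℝ} (hy : 0 < y) : HasDerivAt phi (dphiExp (exp (2*y))) y := by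
  have hphi : phi = (fun u => (1/2) * log (R u)) ∘ fun y => exp (2*y) := by
    funext y; simp only [phi, P_eq_R_exp, Function.comp]
  rw [hphi]
  refine ((hasDerivAt_half_log_R (u := exp (2*y)) (one_lt_exp_iff.2 (by positivity))).comp y
    (hasDerivAt_exp_two_mul y)).congr_deriv ?_
  rw [dphiExp]; ring

lemma hasDerivAt_dphiExp {u : ℝ} (hu : 1 < u) :
    HasDerivAt dphiExp ((10*u^2 + 4*u + 10)/(u^2 + 10*u + 1)^2 + 2/(u - 1)^2) u := by
  have hu1 : u - 1 ≠ 0 := by linarith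
  have hq : 0 < u^2 + 10*u + 1 := by positivity
  have hlog := (((hasDerivAt_id u).add_const 5).div
    ((((hasDerivAt_id u).pow 2).add ((hasDerivAt_id u).const_mul 10)).add_const 1) hq.ne').sub
    ((hasDerivAt_const u (1:ℝ)).div ((hasDerivAt_id u).sub_const 1) hu1)
  refine (((hasDerivAt_id u).const_mul 2).mul hlog).congr_deriv ?_
  simp only [id, Pi.add_apply, Pi.sub_apply, Pi.div_apply, Pi.pow_apply]
  field_simp
  ring

lemma deriv_deriv_phi {y : ℝ} (hy : 0 < y) :
    deriv (deriv phi) y = 2 * exp (2*y) *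
      ((10*exp (2*y)^2 + 4*exp (2*y) + 10)/(exp (2*y)^2 + 10*exp (2*y) + 1)^2
        + 2/(exp (2*y) - 1)^2) := by
  have hderiv : deriv phi =ᶠ[nhds y] dphiExp ∘ fun y => exp (2*y) := by
    filter_upwards [Ioi_mem_nhds hy] with z hz using (hasDerivAt_phi hz).deriv
  rw [hderiv.deriv_eq, ((hasDerivAt_dphiExp (u := exp (2*y)) (one_lt_exp_iff.2 (by positivity))).comp y
    (hasDerivAt_exp_two_mul y)).deriv]
  ring

/-- Since `φ` depends only on `y`, `K = -e^{-2φ} Δφ = -(1/P(y)) φ''(y)`. -/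
theorem stmt_2 :
    ∀ y : ℝ, 0 < y →
      -(1 / P y) * deriv (deriv phi) y =
        -(96 * Real.exp (2*y) *
            (Real.exp (8*y) + 2 * Real.exp (6*y) + 18 * Real.exp (4*y) +
              2 * Real.exp (2*y) + 1)) /
          (Real.exp (4*y) + 10 * Real.exp (2*y) + 1)^3 := by
  intro y hy
  have hu : 1 < exp (2*y) := one_lt_exp_iff.2 (by positivity)
  have hu1 : exp (2*y) - 1 ≠ 0 := by linarith
  obtain ⟨e4, e6, e8⟩ : exp (4*y) = exp (2*y)^2 ∧ exp (6*y) = exp (2*y)^3 ∧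
      exp (8*y) = exp (2*y)^4 := by
    refine ⟨?_, ?_, ?_⟩ <;> rw [← exp_mul_eq_pow_exp_two_mul] <;> norm_num
  rw [deriv_deriv_phi hy, P_eq_R_exp, R, e4, e6, e8]
  field_simp
  ring
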